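/- arXiv:0705.4670 — 7 statements merged into one kernel-verified Lean document; each statement's English description precedes it below -/
import Mathlib

section
/- Let b, k : ℝ → ℝ be continuous on [t₀, ∞) with b(t) > 0 for all t ≥ t₀. Suppose there is a constant M with 1/b(t) + k(t) ≥ M for all t ≥ t₀, and that the function E₀(t) = exp(1/b(t) + k(t)) is differentiable and satisfies E₀'(t) ≤ -(E₀(t) - k(t))²/(2 b(t)) for all t ≥ t₀. Then for every C² solution u of u'' + b u' + k u = 0 on [t₀, ∞), the function E(t) = exp(1/b(t)+k(t)) u(t)² + u'(t)² is nonincreasing on [t₀, ∞). -/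
/-!
Along a solution, `E' = w' u² + 2 (w - k) u u' - 2 b u'²` with `w = exp (1 / b + k)`, after
eliminating `u''` with the equation. The hypothesis `w' ≤ -(w - k)² / (2 b)` turns this into
`E' ≤ -((w - k) u - 2 b u')² / (2 b) ≤ 0`.
-/

open Set

lemma antitoneOn_of_forall_hasDerivAt_nonpos {D : Set ℝ} (hD : Convex ℝ D) {f f' : ℝ → ℝ}
    (hf : ∀ x ∈ D, HasDerivAt f (f' x) x) (hf' : ∀ x ∈ D, f' x ≤ 0) : AntitoneOn f D :=
  antitoneOn_of_hasDerivWithinAt_nonpos hD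
    (fun x hx ↦ (hf x hx).continuousAt.continuousWithinAt)
    (fun x hx ↦ (hf x (interior_subset hx)).hasDerivWithinAt)
    (fun x hx ↦ hf' x (interior_subset hx))

lemma hasDerivAt_weighted_energy {w u v : ℝ → ℝ} {w' v' b k t : ℝ}
    (hw : HasDerivAt w w' t) (hu : HasDerivAt u (v t) t) (hv : HasDerivAt v v' t)
    (hode : v' + b * v t + k * u t = 0) :
    HasDerivAt (fun s ↦ w s * u s ^ 2 + v s ^ 2)
      (w' * u t ^ 2 + 2 * (w t - k) * u t * v t - 2 * b * v t ^ 2) t := by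
  refine ((hw.mul (hu.fun_pow 2)).add (hv.fun_pow 2)).congr_deriv ?_
  rw [show v' = -(b * v t) - k * u t by linarith]
  push_cast
  ring

lemma quadratic_nonpos_of_le_neg_sq_div {b c w' x y : ℝ} (hb : 0 < b)
    (hw' : w' ≤ -c ^ 2 / (2 * b)) : w' * x ^ 2 + 2 * c * x * y - 2 * b * y ^ 2 ≤ 0 :=
  calc w' * x ^ 2 + 2 * c * x * y - 2 * b * y ^ 2
      ≤ -c ^ 2 / (2 * b) * x ^ 2 + 2 * c * x * y - 2 * b * y ^ 2 := by
        gcongr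
    _ = -(c * x - 2 * b * y) ^ 2 / (2 * b) := by
        field_simp
        ring
    _ ≤ 0 := div_nonpos_of_nonpos_of_nonneg (neg_nonpos.2 (sq_nonneg _)) (by positivity)

theorem stmt_0_general (t₀ : ℝ) (b k E' u u' u'' : ℝ → ℝ)
    (hbpos : ∀ t ≥ t₀, 0 < b t)
    (hE : ∀ t ≥ t₀, HasDerivAt (fun s => Real.exp (1 / b s + k s)) (E' t) t)
    (hE' : ∀ t ≥ t₀, E' t ≤ -(Real.exp (1 / b t + k t) - k t) ^ 2 / (2 * b t))
    (hu : ∀ t ≥ t₀, HasDerivAt u (u' t) t)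
    (hu' : ∀ t ≥ t₀, HasDerivAt u' (u'' t) t)
    (hode : ∀ t ≥ t₀, u'' t + b t * u' t + k t * u t = 0) :
    AntitoneOn (fun t => Real.exp (1 / b t + k t) * u t ^ 2 + u' t ^ 2) (Ici t₀) :=
  antitoneOn_of_forall_hasDerivAt_nonpos (convex_Ici t₀)
    (fun t ht ↦ hasDerivAt_weighted_energy (hE t ht) (hu t ht) (hu' t ht) (hode t ht))
    (fun t ht ↦ quadratic_nonpos_of_le_neg_sq_div (hbpos t ht) (hE' t ht))

theorem stmt_0 (t₀ M : ℝ) (b k E' u u' u'' : ℝ → ℝ)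
    (hb : ContinuousOn b (Ici t₀)) (hk : ContinuousOn k (Ici t₀))
    (hbpos : ∀ t ≥ t₀, 0 < b t)
    (hM : ∀ t ≥ t₀, M ≤ 1 / b t + k t)
    (hE : ∀ t ≥ t₀, HasDerivAt (fun s => Real.exp (1 / b s + k s)) (E' t) t)
    (hE' : ∀ t ≥ t₀, E' t ≤ -(Real.exp (1 / b t + k t) - k t) ^ 2 / (2 * b t))
    (hu : ∀ t ≥ t₀, HasDerivAt u (u' t) t)
    (hu' : ∀ t ≥ t₀, HasDerivAt u' (u'' t) t)
    (hu'' : ContinuousOn u'' (Ici t₀))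
    (hode : ∀ t ≥ t₀, u'' t + b t * u' t + k t * u t = 0) :
    AntitoneOn (fun t => Real.exp (1 / b t + k t) * u t ^ 2 + u' t ^ 2) (Ici t₀) :=
  stmt_0_general t₀ b k E' u u' u'' hbpos hE hE' hu hu' hode
end

section
/- Let b, k : ℝ → ℝ be continuous with b(t) > 0, 1/b(t) + k(t) ≥ M, and (d/dt) exp(1/b(t)+k(t)) ≤ -(exp(1/b(t)+k(t)) - k(t))²/(2 b(t)) for all t ≥ t₀. Then the zero solution of u'' + b u' + k u = 0 is stable: for every ε > 0 there exists δ > 0 such that every solution with u(t₀)² + u'(t₀)² < δ² satisfies u(t)² + u'(t)² < ε² for all t ≥ t₀. -/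
/-!
The weighted energy `V = g u² + u'²` with `g = exp (1/b + k)` is a Lyapunov function: along a
solution, `2 b V' ≤ -((g - k) u - 2 b u')² ≤ 0` by the hypothesis on the derivative of `g`.
Since `g ≥ exp M > 0`, the energy is comparable to `u² + u'²`, so the monotonicity of `V`
bounds `u(t)² + u'(t)²` by a constant multiple of its value at `t₀`.
-/

open Set Real MeasureTheory Filter

/-- Stability of the zero solution of u'' + b u' + k u = 0 on [t₀, ∞). -/
def IsStableZero (t₀ : ℝ) (b k : ℝ → ℝ) : Prop :=
  ∀ ε > (0 : ℝ), ∃ δ > (0 : ℝ), ∀ u u' u'' : ℝ → ℝ,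
    (∀ t ≥ t₀, HasDerivAt u (u' t) t) →
    (∀ t ≥ t₀, HasDerivAt u' (u'' t) t) →
    (∀ t ≥ t₀, u'' t + b t * u' t + k t * u t = 0) →
    u t₀ ^ 2 + u' t₀ ^ 2 < δ ^ 2 →
    ∀ t ≥ t₀, u t ^ 2 + u' t ^ 2 < ε ^ 2

theorem isStableZero_of_energy_bound {t₀ c C : ℝ} {b k : ℝ → ℝ} (hc : 0 < c) (hC : 0 < C)
    (hbound : ∀ u u' u'' : ℝ → ℝ,
      (∀ t ≥ t₀, HasDerivAt u (u' t) t) →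
      (∀ t ≥ t₀, HasDerivAt u' (u'' t) t) →
      (∀ t ≥ t₀, u'' t + b t * u' t + k t * u t = 0) →
      ∀ t ≥ t₀, c * (u t ^ 2 + u' t ^ 2) ≤ C * (u t₀ ^ 2 + u' t₀ ^ 2)) :
    IsStableZero t₀ b k := by
  intro ε hε
  refine ⟨ε * √(c / C), by positivity, fun u u' u'' hu hu' hode hinit t ht ↦ ?_⟩
  rw [mul_pow, sq_sqrt (by positivity)] at hinit
  have : c * (u t ^ 2 + u' t ^ 2) < c * ε ^ 2 :=
    calc c * (u t ^ 2 + u' t ^ 2) ≤ C * (u t₀ ^ 2 + u' t₀ ^ 2) := hbound u u' u'' hu hu' hode t ht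
      _ < C * (ε ^ 2 * (c / C)) := by gcongr
      _ = c * ε ^ 2 := by field_simp
  exact lt_of_mul_lt_mul_left this hc.le

theorem weightedEnergy_deriv_nonpos {b k g g' u v w : ℝ} (hb : 0 < b)
    (hode : w + b * v + k * u = 0) (hg' : g' ≤ -(g - k) ^ 2 / (2 * b)) :
    g' * u ^ 2 + g * (2 * u * v) + 2 * v * w ≤ 0 := by
  have hw : w = -(b * v + k * u) := by linarith
  rw [le_div_iff₀ (by positivity)] at hg'
  have h : 2 * b * (g' * u ^ 2 + g * (2 * u * v) + 2 * v * w) ≤ 0 :=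
    calc 2 * b * (g' * u ^ 2 + g * (2 * u * v) + 2 * v * w)
        = g' * (2 * b) * u ^ 2 + 4 * b * (g - k) * u * v - 4 * b ^ 2 * v ^ 2 := by
          rw [hw]; ring
      _ ≤ -(g - k) ^ 2 * u ^ 2 + 4 * b * (g - k) * u * v - 4 * b ^ 2 * v ^ 2 := by
          gcongr
      _ = -((g - k) * u - 2 * b * v) ^ 2 := by ring
      _ ≤ 0 := neg_nonpos.mpr (sq_nonneg _)
  exact nonpos_of_mul_nonpos_right h (by positivity)

section WeightedEnergy

variable {t₀ : ℝ} {b k g g' u u' u'' : ℝ → ℝ}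

theorem antitoneOn_weightedEnergy (hbpos : ∀ t ≥ t₀, 0 < b t)
    (hg : ∀ t ≥ t₀, HasDerivAt g (g' t) t)
    (hg' : ∀ t ≥ t₀, g' t ≤ -(g t - k t) ^ 2 / (2 * b t))
    (hu : ∀ t ≥ t₀, HasDerivAt u (u' t) t) (hu' : ∀ t ≥ t₀, HasDerivAt u' (u'' t) t)
    (hode : ∀ t ≥ t₀, u'' t + b t * u' t + k t * u t = 0) :
    AntitoneOn (fun t ↦ g t * u t ^ 2 + u' t ^ 2) (Ici t₀) := by
  have hV : ∀ t ≥ t₀, HasDerivAt (fun t ↦ g t * u t ^ 2 + u' t ^ 2)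
      (g' t * u t ^ 2 + g t * (2 * u t * u' t) + 2 * u' t * u'' t) t := fun t ht ↦
    (((hg t ht).mul ((hu t ht).fun_pow 2)).add ((hu' t ht).fun_pow 2)).congr_deriv (by norm_num)
  refine antitoneOn_of_hasDerivWithinAt_nonpos
    (f' := fun t ↦ g' t * u t ^ 2 + g t * (2 * u t * u' t) + 2 * u' t * u'' t) (convex_Ici t₀)
    (fun t ht ↦ (hV t ht).continuousAt.continuousWithinAt) (fun t ht ↦ ?_) (fun t ht ↦ ?_)
  all_goals rw [interior_Ici] at ht
  · exact (hV t ht.le).hasDerivWithinAt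
  · exact weightedEnergy_deriv_nonpos (hbpos t ht.le) (hode t ht.le) (hg' t ht.le)

theorem isStableZero_of_weight {m : ℝ} (hm : 0 < m) (hbpos : ∀ t ≥ t₀, 0 < b t)
    (hgm : ∀ t ≥ t₀, m ≤ g t) (hg : ∀ t ≥ t₀, HasDerivAt g (g' t) t)
    (hg' : ∀ t ≥ t₀, g' t ≤ -(g t - k t) ^ 2 / (2 * b t)) :
    IsStableZero t₀ b k := by
  refine isStableZero_of_energy_bound (c := min m 1) (C := max (g t₀) 1)
    (lt_min hm one_pos) (lt_max_of_lt_right one_pos) fun u u' u'' hu hu' hode t ht ↦ ?_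
  have hanti := antitoneOn_weightedEnergy hbpos hg hg' hu hu' hode self_mem_Ici ht ht
  have hlow : min m 1 ≤ g t := (min_le_left _ _).trans (hgm t ht)
  calc min m 1 * (u t ^ 2 + u' t ^ 2)
      ≤ g t * u t ^ 2 + u' t ^ 2 := by
        nlinarith [min_le_right m 1, sq_nonneg (u t), sq_nonneg (u' t)]
    _ ≤ g t₀ * u t₀ ^ 2 + u' t₀ ^ 2 := hanti
    _ ≤ max (g t₀) 1 * (u t₀ ^ 2 + u' t₀ ^ 2) := by
        nlinarith [le_max_left (g t₀) 1, le_max_right (g t₀) 1, sq_nonneg (u t₀),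
          sq_nonneg (u' t₀)]

end WeightedEnergy

theorem stmt_1_general (t₀ M : ℝ) (b k E' : ℝ → ℝ)
    (hbpos : ∀ t ≥ t₀, 0 < b t)
    (hM : ∀ t ≥ t₀, M ≤ 1 / b t + k t)
    (hE : ∀ t ≥ t₀, HasDerivAt (fun s => Real.exp (1 / b s + k s)) (E' t) t)
    (hE' : ∀ t ≥ t₀, E' t ≤ -(Real.exp (1 / b t + k t) - k t) ^ 2 / (2 * b t)) :
    IsStableZero t₀ b k :=
  isStableZero_of_weight (exp_pos M) hbpos (fun t ht ↦ exp_le_exp.mpr (hM t ht)) hE hE'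

theorem stmt_1 (t₀ M : ℝ) (b k E' : ℝ → ℝ)
    (hb : ContinuousOn b (Ici t₀)) (hk : ContinuousOn k (Ici t₀))
    (hbpos : ∀ t ≥ t₀, 0 < b t)
    (hM : ∀ t ≥ t₀, M ≤ 1 / b t + k t)
    (hE : ∀ t ≥ t₀, HasDerivAt (fun s => Real.exp (1 / b s + k s)) (E' t) t)
    (hE' : ∀ t ≥ t₀, E' t ≤ -(Real.exp (1 / b t + k t) - k t) ^ 2 / (2 * b t)) :
    IsStableZero t₀ b k :=
  stmt_1_general t₀ M b k E' hbpos hM hE hE'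
end

section
/- Suppose k(t) ≤ 0 for all t ≥ t₀ and ∫_{t₀}^∞ exp(-∫_{t₀}^s b(τ) dτ) ds = ∞. Then every C² solution u of u'' + b u' + k u = 0 with u(t₀) > 0 and u'(t₀) > 0 satisfies u(t) ≥ u(t₀) + u'(t₀) ∫_{t₀}^t exp(-∫_{t₀}^s b) ds for all t ≥ t₀; in particular u is unbounded and the zero solution is unstable. -/
/-!
With `B s = ∫_{t₀}^s b`, the ODE says `(u' e^B)' = -k u e^B`, which is `≥ 0` as long as `u ≥ 0`.
A continuity argument therefore keeps `u'` positive: as long as `u' > 0` the function `u` grows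
and stays positive, so `u' e^B` does not decrease and `u' ≥ u'(t₀) e^{-B} > 0`. Integrating this
bound gives the lower bound for `u`, which tends to `+∞` by the divergence hypothesis. Since the
equation is linear, rescaling `u` gives solutions with arbitrarily small initial data that are
still unbounded, so the zero solution is unstable.
-/

open Set Real MeasureTheory Filter

open scoped Topology

lemma forall_pos_of_forall_Ico_pos {f : ℝ → ℝ} {a : ℝ} (hf : ContinuousOn f (Ici a))
    (hstep : ∀ T ≥ a, (∀ s ∈ Ico a T, 0 < f s) → 0 < f T) : ∀ t ≥ a, 0 < f t := by
  by_contra! hneg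
  obtain ⟨t, ht, hft⟩ := hneg
  set S := Ici a ∩ f ⁻¹' Iic 0
  have hS : S.Nonempty := ⟨t, ht, hft⟩
  have hSbdd : BddBelow S := ⟨a, fun _ hx => hx.1⟩
  have hTS : sInf S ∈ S :=
    (hf.preimage_isClosed_of_isClosed isClosed_Ici isClosed_Iic).csInf_mem hS hSbdd
  refine (hstep _ hTS.1 fun s hs => ?_).not_ge hTS.2
  exact not_le.1 fun hfs => (csInf_le hSbdd ⟨hs.1, hfs⟩).not_gt hs.2

lemma monotoneOn_of_hasDerivAt_nonneg {D : Set ℝ} (hD : Convex ℝ D) {f f' : ℝ → ℝ}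
    (hf : ∀ x ∈ D, HasDerivAt f (f' x) x) (hf' : ∀ x ∈ interior D, 0 ≤ f' x) :
    MonotoneOn f D :=
  monotoneOn_of_hasDerivWithinAt_nonneg hD (fun x hx => (hf x hx).continuousAt.continuousWithinAt)
    (fun x hx => (hf x (interior_subset hx)).hasDerivWithinAt) hf'

/-- The extension `τ ↦ b (max τ t₀)` makes the primitive differentiable at `t₀` as well. -/
lemma exists_hasDerivAt_eq_intervalIntegral {b : ℝ → ℝ} {t₀ : ℝ} (hb : ContinuousOn b (Ici t₀)) :
    ∃ B : ℝ → ℝ, ∀ s ≥ t₀, B s = (∫ τ in t₀..s, b τ) ∧ HasDerivAt B (b s) s := by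
  have hbc : Continuous fun τ => b (max τ t₀) :=
    hb.comp_continuous (by fun_prop) fun τ => le_max_right τ t₀
  refine ⟨fun s => ∫ τ in t₀..s, b (max τ t₀), fun s hs => ⟨?_, ?_⟩⟩
  · refine intervalIntegral.integral_congr fun τ hτ => ?_
    rw [uIcc_of_le hs] at hτ
    simp only [max_eq_left hτ.1]
  · simpa only [max_eq_left hs] using (hbc.integral_hasStrictDerivAt t₀ s).hasDerivAt

section IntegratingFactor

variable {t₀ : ℝ} {b k u u' u'' B : ℝ → ℝ}
  (hB : ∀ s ≥ t₀, HasDerivAt B (b s) s)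
  (hu : ∀ t ≥ t₀, HasDerivAt u (u' t) t) (hu' : ∀ t ≥ t₀, HasDerivAt u' (u'' t) t)
  (hode : ∀ t ≥ t₀, u'' t + b t * u' t + k t * u t = 0)
  (hk : ∀ t ≥ t₀, k t ≤ 0) (hu0 : 0 < u t₀) (hu1 : 0 < u' t₀)

include hB hu' hode in
lemma hasDerivAt_mul_exp {s : ℝ} (hs : t₀ ≤ s) :
    HasDerivAt (fun t => u' t * exp (B t)) (-k s * u s * exp (B s)) s :=
  ((hu' s hs).mul (hB s hs).exp).congr_deriv (by linear_combination exp (B s) * hode s hs)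

include hB hu hu' hode hk hu0 in
lemma monotoneOn_mul_exp {D : Set ℝ} (hD : Convex ℝ D) (hDt₀ : D ⊆ Ici t₀) (ht₀ : t₀ ∈ D)
    (hu'D : ∀ s ∈ interior D, 0 ≤ u' s) : MonotoneOn (fun t => u' t * exp (B t)) D := by
  have hmono : MonotoneOn u D :=
    monotoneOn_of_hasDerivAt_nonneg hD (fun x hx => hu x (hDt₀ hx)) hu'D
  refine monotoneOn_of_hasDerivAt_nonneg hD
    (fun x hx => hasDerivAt_mul_exp hB hu' hode (hDt₀ hx)) fun x hx => ?_
  have hxD := interior_subset hx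
  have hux : 0 < u x := hu0.trans_le (hmono ht₀ hxD (hDt₀ hxD))
  exact mul_nonneg (mul_nonneg (neg_nonneg.2 (hk x (hDt₀ hxD))) hux.le) (exp_pos _).le

include hB hu hu' hode hk hu0 hu1 in
lemma deriv_pos_of_ode : ∀ t ≥ t₀, 0 < u' t := by
  refine forall_pos_of_forall_Ico_pos (fun t ht => (hu' t ht).continuousAt.continuousWithinAt)
    fun T hT hpos => ?_
  have hmono := monotoneOn_mul_exp hB hu hu' hode hk hu0 (convex_Icc t₀ T) Icc_subset_Ici_self
    (left_mem_Icc.2 hT) fun s hs => by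
      rw [interior_Icc] at hs
      exact (hpos s ⟨hs.1.le, hs.2⟩).le
  have hwT : 0 < u' T * exp (B T) := (mul_pos hu1 (exp_pos _)).trans_le
    (hmono (left_mem_Icc.2 hT) (right_mem_Icc.2 hT) hT)
  exact pos_of_mul_pos_left hwT (exp_pos _).le

include hB hu hu' hode hk hu0 hu1 in
lemma mul_exp_neg_le_deriv (hB₀ : B t₀ = 0) {s : ℝ} (hs : t₀ ≤ s) :
    u' t₀ * exp (-B s) ≤ u' s := by
  have hmono := monotoneOn_mul_exp hB hu hu' hode hk hu0 (convex_Ici t₀) subset_rfl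
    self_mem_Ici fun x hx => by
      rw [interior_Ici] at hx
      exact (deriv_pos_of_ode hB hu hu' hode hk hu0 hu1 x hx.le).le
  have hw := hmono self_mem_Ici hs hs
  simp only [hB₀, exp_zero, mul_one] at hw
  rwa [exp_neg, ← div_eq_mul_inv, div_le_iff₀ (exp_pos _)]

include hB hu hu' hode hk hu0 hu1 in
lemma add_mul_integral_exp_neg_le (hB₀ : B t₀ = 0) {t : ℝ} (ht : t₀ ≤ t) :
    u t₀ + u' t₀ * ∫ s in t₀..t, exp (-B s) ≤ u t := by
  have hBc : ContinuousOn B (Icc t₀ t) := fun s hs => (hB s hs.1).continuousAt.continuousWithinAt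
  have hint := intervalIntegral.integral_le_sub_of_hasDeriv_right_of_le
    (φ := fun s => u' t₀ * exp (-B s)) ht
    (fun s hs => (hu s hs.1).continuousAt.continuousWithinAt)
    (fun s hs => (hu s hs.1.le).hasDerivWithinAt)
    (continuousOn_const.mul hBc.neg.rexp).integrableOn_Icc
    fun s hs => mul_exp_neg_le_deriv hB hu hu' hode hk hu0 hu1 hB₀ hs.1.le
  rw [intervalIntegral.integral_const_mul] at hint
  linarith

end IntegratingFactor

lemma not_isStableZero_of_not_bddAbove {t₀ : ℝ} {b k u u' u'' : ℝ → ℝ}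
    (hu : ∀ t ≥ t₀, HasDerivAt u (u' t) t) (hu' : ∀ t ≥ t₀, HasDerivAt u' (u'' t) t)
    (hode : ∀ t ≥ t₀, u'' t + b t * u' t + k t * u t = 0) (hunb : ¬BddAbove (u '' Ici t₀)) :
    ¬IsStableZero t₀ b k := by
  intro hstab
  obtain ⟨δ, hδ, hsmall⟩ := hstab 1 one_pos
  set S := u t₀ ^ 2 + u' t₀ ^ 2
  have hlim : Tendsto (fun c : ℝ => c ^ 2 * S) (𝓝[>] 0) (𝓝 0) := by
    have : Tendsto (fun c : ℝ => c ^ 2 * S) (𝓝 0) (𝓝 (0 ^ 2 * S)) :=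
      ((continuous_pow 2).mul continuous_const).tendsto 0
    simpa using this.mono_left nhdsWithin_le_nhds
  obtain ⟨c, hcS, hc⟩ :=
    ((hlim.eventually (gt_mem_nhds (pow_pos hδ 2))).and self_mem_nhdsWithin).exists
  refine hunb ⟨1 / c, ?_⟩
  rintro _ ⟨t, ht, rfl⟩
  have hct := hsmall (fun t => c * u t) (fun t => c * u' t) (fun t => c * u'' t)
    (fun t ht => (hu t ht).const_mul c) (fun t ht => (hu' t ht).const_mul c)
    (fun t ht => by linear_combination c * hode t ht) (by linear_combination hcS) t ht
  rw [le_div_iff₀ (mem_Ioi.1 hc)]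
  nlinarith [sq_nonneg (c * u' t)]

theorem stmt_4_general (t₀ : ℝ) (b k u u' u'' : ℝ → ℝ)
    (hb : ContinuousOn b (Ici t₀))
    (hk : ∀ t ≥ t₀, k t ≤ 0)
    (hdiv : Tendsto (fun t => ∫ s in t₀..t, Real.exp (-∫ τ in t₀..s, b τ)) atTop atTop)
    (hu : ∀ t ≥ t₀, HasDerivAt u (u' t) t)
    (hu' : ∀ t ≥ t₀, HasDerivAt u' (u'' t) t)
    (hode : ∀ t ≥ t₀, u'' t + b t * u' t + k t * u t = 0)
    (hu0 : 0 < u t₀) (hu1 : 0 < u' t₀) :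
    (∀ t ≥ t₀, u t₀ + u' t₀ * ∫ s in t₀..t, Real.exp (-∫ τ in t₀..s, b τ) ≤ u t)
    ∧ ¬ BddAbove (u '' Ici t₀)
    ∧ ¬ IsStableZero t₀ b k := by
  obtain ⟨B, hB⟩ := exists_hasDerivAt_eq_intervalIntegral hb
  have hB₀ : B t₀ = 0 := by simp [(hB t₀ le_rfl).1]
  have hlower : ∀ t ≥ t₀, u t₀ + u' t₀ * ∫ s in t₀..t, exp (-∫ τ in t₀..s, b τ) ≤ u t := by
    intro t ht
    have h := add_mul_integral_exp_neg_le (fun s hs => (hB s hs).2) hu hu' hode hk hu0 hu1 hB₀ ht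
    rwa [intervalIntegral.integral_congr fun s hs => by
      rw [(hB s (uIcc_of_le ht ▸ hs).1).1]] at h
  have htend : Tendsto u atTop atTop :=
    tendsto_atTop_mono' _ ((eventually_ge_atTop t₀).mono hlower)
      (tendsto_atTop_add_const_left _ _ (hdiv.const_mul_atTop hu1))
  have hunb : ¬BddAbove (u '' Ici t₀) := by
    rintro ⟨M, hM⟩
    obtain ⟨t, ht, hMt⟩ := ((eventually_ge_atTop t₀).and (htend.eventually_gt_atTop M)).exists
    exact (hM (mem_image_of_mem u ht)).not_gt hMt
  exact ⟨hlower, hunb, not_isStableZero_of_not_bddAbove hu hu' hode hunb⟩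

theorem stmt_4 (t₀ : ℝ) (b k u u' u'' : ℝ → ℝ)
    (hb : ContinuousOn b (Ici t₀)) (hkc : ContinuousOn k (Ici t₀))
    (hk : ∀ t ≥ t₀, k t ≤ 0)
    (hdiv : Tendsto (fun t => ∫ s in t₀..t, Real.exp (-∫ τ in t₀..s, b τ)) atTop atTop)
    (hu : ∀ t ≥ t₀, HasDerivAt u (u' t) t)
    (hu' : ∀ t ≥ t₀, HasDerivAt u' (u'' t) t)
    (hu'' : ContinuousOn u'' (Ici t₀))
    (hode : ∀ t ≥ t₀, u'' t + b t * u' t + k t * u t = 0)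
    (hu0 : 0 < u t₀) (hu1 : 0 < u' t₀) :
    (∀ t ≥ t₀, u t₀ + u' t₀ * ∫ s in t₀..t, Real.exp (-∫ τ in t₀..s, b τ) ≤ u t)
    ∧ ¬ BddAbove (u '' Ici t₀)
    ∧ ¬ IsStableZero t₀ b k :=
  stmt_4_general t₀ b k u u' u'' hb hk hdiv hu hu' hode hu0 hu1
end

section
/- Let b, k be continuous on [t₀, ∞) satisfying: (i) ∫_{t₀}^∞ e^{-∫_{t₀}^s b} ds < ∞; (ii) e^{-∫_{t₀}^s b} < 2 for all s ≥ t₀; (iii) ∫_{t₀}^∞ e^{-∫_{t₀}^s b} ∫_{t₀}^s |k(τ)| e^{∫_{t₀}^τ b} dτ ds < 1/2; (iv) e^{-∫_{t₀}^s b} ∫_{t₀}^s |k(τ)| e^{∫_{t₀}^τ b} dτ < 1/2 for all s ≥ t₀. Then the zero solution of u'' + b u' + k u = 0 is stable. -/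
/-!
With the integrating factor `e^B`, `B(s) = ∫_{t₀}^s b`, the equation becomes
`(u' e^B)' = -k u e^B`, so `|u'(s)| ≤ e^{-B(s)} (|u'(t₀)| + ∫_{t₀}^s |k| e^B |u|)`.
If `M` bounds `|u|` on `[t₀, z]`, integrating this once more gives
`|u(z)| ≤ |u(t₀)| + C |u'(t₀)| + q M`, where `C = ∫_{t₀}^∞ e^{-B}` and `q < 1/2` is the
integral in (iii). At a maximum point of `|u|` on `[t₀, t]` this yields
`|u| ≤ 2 (|u(t₀)| + C |u'(t₀)|)`, and feeding that back, (ii) and (iv) give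
`|u'(t)| ≤ 2 |u'(t₀)| + |u(t₀)| + C |u'(t₀)|`. So `|u| + |u'|` stays below a fixed multiple
of its value at `t₀`.
-/

open Set Real MeasureTheory Filter

section Calculus

variable {f : ℝ → ℝ} {a s : ℝ}

theorem hasDerivAt_integral_of_continuousOn_Ici (hf : ContinuousOn f (Ici a)) {x : ℝ}
    (hx : a < x) : HasDerivAt (fun t => ∫ τ in a..t, f τ) (f x) x :=
  intervalIntegral.integral_hasDerivAt_right
    ((hf.mono (uIcc_of_le hx.le ▸ Icc_subset_Ici_self)).intervalIntegrable)
    (hf.mono Ioi_subset_Ici_self |>.stronglyMeasurableAtFilter isOpen_Ioi x hx)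
    (hf.continuousAt (Ici_mem_nhds hx))

theorem continuousOn_integral_Icc_of_continuousOn_Ici (hf : ContinuousOn f (Ici a))
    (hs : a ≤ s) : ContinuousOn (fun t => ∫ τ in a..t, f τ) (Icc a s) := by
  simpa only [uIcc_of_le hs] using intervalIntegral.continuousOn_primitive_interval'
    ((hf.mono Icc_subset_Ici_self).intervalIntegrable_of_Icc hs) left_mem_uIcc

theorem intervalIntegral_le_setIntegral_Ici (hf : IntegrableOn f (Ici a))
    (hf₀ : ∀ t ≥ a, 0 ≤ f t) (hs : a ≤ s) : ∫ t in a..s, f t ≤ ∫ t in Ici a, f t := by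
  rw [intervalIntegral.integral_of_le hs]
  exact setIntegral_mono_set hf ((ae_restrict_iff' measurableSet_Ici).2 (ae_of_all _ hf₀))
    (Ioc_subset_Ioi_self.trans Ioi_subset_Ici_self).eventuallyLE

theorem mul_exp_integral_eq_of_hasDerivAt {b v v' : ℝ → ℝ}
    (hb : ContinuousOn b (Ici a)) (hf : ContinuousOn f (Ici a))
    (hv : ∀ t ≥ a, HasDerivAt v (v' t) t) (hode : ∀ t ≥ a, v' t + b t * v t = f t)
    (hs : a ≤ s) :
    v s * exp (∫ τ in a..s, b τ) = v a + ∫ τ in a..s, f τ * exp (∫ x in a..τ, b x) := by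
  have hE := (continuousOn_integral_Icc_of_continuousOn_Ici hb hs).rexp
  have hv_cont : ContinuousOn v (Icc a s) := fun t ht =>
    (hv t ht.1).continuousAt.continuousWithinAt
  have hFTC := intervalIntegral.integral_eq_sub_of_hasDerivAt_of_le
    (f := fun t => v t * exp (∫ τ in a..t, b τ))
    (f' := fun t => f t * exp (∫ τ in a..t, b τ)) hs (hv_cont.mul hE) (fun t ht => ?_)
    (((hf.mono Icc_subset_Ici_self).mul hE).intervalIntegrable_of_Icc hs)
  · rw [intervalIntegral.integral_same, exp_zero, mul_one] at hFTC
    linarith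
  · refine ((hv t ht.1.le).mul
      (hasDerivAt_integral_of_continuousOn_Ici hb ht.1).exp).congr_deriv ?_
    rw [← hode t ht.1.le]
    ring

theorem abs_le_of_abs_deriv_le {u u' F G : ℝ → ℝ} {c M : ℝ} (hs : a ≤ s)
    (hu : ∀ t ∈ Icc a s, HasDerivAt u (u' t) t) (hu' : ContinuousOn u' (Icc a s))
    (hF : IntegrableOn F (Ici a)) (hG : IntegrableOn G (Ici a))
    (hF₀ : ∀ t ≥ a, 0 ≤ F t) (hG₀ : ∀ t ≥ a, 0 ≤ G t) (hc : 0 ≤ c) (hM : 0 ≤ M)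
    (hbound : ∀ t ∈ Icc a s, |u' t| ≤ c * F t + M * G t) :
    |u s| ≤ |u a| + c * (∫ t in Ici a, F t) + M * ∫ t in Ici a, G t := by
  have hF_int := (intervalIntegrable_iff_integrableOn_Icc_of_le hs).2
    (hF.mono_set Icc_subset_Ici_self)
  have hG_int := (intervalIntegrable_iff_integrableOn_Icc_of_le hs).2
    (hG.mono_set Icc_subset_Ici_self)
  have hFTC : ∫ t in a..s, u' t = u s - u a :=
    intervalIntegral.integral_eq_sub_of_hasDerivAt (uIcc_of_le hs ▸ hu)
      (hu'.intervalIntegrable_of_Icc hs)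
  have hint : |u s - u a| ≤ c * (∫ t in a..s, F t) + M * ∫ t in a..s, G t := by
    rw [← hFTC, ← intervalIntegral.integral_const_mul, ← intervalIntegral.integral_const_mul,
      ← intervalIntegral.integral_add (hF_int.const_mul c) (hG_int.const_mul M)]
    exact intervalIntegral.norm_integral_le_of_norm_le (f := u') hs
      (ae_of_all _ fun t ht => hbound t (Ioc_subset_Icc_self ht))
      ((hF_int.const_mul c).add (hG_int.const_mul M))
  calc |u s| ≤ |u a| + |u s - u a| := by
        simpa only [add_sub_cancel] using abs_add_le (u a) (u s - u a)
    _ ≤ |u a| + (c * (∫ t in Ici a, F t) + M * ∫ t in Ici a, G t) := by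
        gcongr
        refine hint.trans (add_le_add ?_ ?_)
        · exact mul_le_mul_of_nonneg_left (intervalIntegral_le_setIntegral_Ici hF hF₀ hs) hc
        · exact mul_le_mul_of_nonneg_left (intervalIntegral_le_setIntegral_Ici hG hG₀ hs) hM
    _ = _ := (add_assoc _ _ _).symm

theorem abs_le_div_of_abs_le_add_mul_sup {A q : ℝ} (hs : a ≤ s)
    (hf : ContinuousOn f (Icc a s)) (hq : q < 1)
    (h : ∀ z ∈ Icc a s, ∀ M, (∀ x ∈ Icc a z, |f x| ≤ M) → |f z| ≤ A + q * M) :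
    ∀ x ∈ Icc a s, |f x| ≤ A / (1 - q) := by
  obtain ⟨z, hz, hmax⟩ := isCompact_Icc.exists_isMaxOn (nonempty_Icc.2 hs) hf.abs
  have hz_le : |f z| ≤ A + q * |f z| :=
    h z hz _ fun x hx => hmax ⟨hx.1, hx.2.trans hz.2⟩
  have hz_bound : |f z| ≤ A / (1 - q) := by
    rw [le_div_iff₀ (sub_pos.2 hq)]
    linarith
  exact fun x hx => (hmax hx).trans hz_bound

end Calculus

structure IsSolution (t₀ : ℝ) (b k u u' u'' : ℝ → ℝ) : Prop where
  hasDerivAt : ∀ t ≥ t₀, HasDerivAt u (u' t) t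
  hasDerivAt_deriv : ∀ t ≥ t₀, HasDerivAt u' (u'' t) t
  ode : ∀ t ≥ t₀, u'' t + b t * u' t + k t * u t = 0

namespace IsSolution

variable {t₀ s : ℝ} {b k u u' u'' : ℝ → ℝ}

theorem continuousOn (hsol : IsSolution t₀ b k u u' u'') : ContinuousOn u (Ici t₀) :=
  fun t ht => (hsol.hasDerivAt t ht).continuousAt.continuousWithinAt

theorem continuousOn_deriv (hsol : IsSolution t₀ b k u u' u'') : ContinuousOn u' (Ici t₀) :=
  fun t ht => (hsol.hasDerivAt_deriv t ht).continuousAt.continuousWithinAt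

theorem abs_deriv_le {M : ℝ} (hb : ContinuousOn b (Ici t₀)) (hk : ContinuousOn k (Ici t₀))
    (hsol : IsSolution t₀ b k u u' u'') (hs : t₀ ≤ s) (hM : ∀ τ ∈ Icc t₀ s, |u τ| ≤ M) :
    |u' s| ≤ |u' t₀| * exp (-∫ τ in t₀..s, b τ)
      + M * (exp (-∫ τ in t₀..s, b τ) * ∫ τ in t₀..s, |k τ| * exp (∫ x in t₀..τ, b x)) := by
  have hE := (continuousOn_integral_Icc_of_continuousOn_Ici hb hs).rexp
  have hid := mul_exp_integral_eq_of_hasDerivAt (f := fun t => -(k t * u t)) hb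
    (hk.mul hsol.continuousOn).neg hsol.hasDerivAt_deriv
    (fun t ht => by linear_combination hsol.ode t ht) hs
  have hint : |∫ τ in t₀..s, -(k τ * u τ) * exp (∫ x in t₀..τ, b x)|
      ≤ M * ∫ τ in t₀..s, |k τ| * exp (∫ x in t₀..τ, b x) := by
    rw [← intervalIntegral.integral_const_mul, ← Real.norm_eq_abs]
    refine intervalIntegral.norm_integral_le_of_norm_le (μ := volume)
      (g := fun τ => M * (|k τ| * exp (∫ x in t₀..τ, b x))) hs
      (ae_of_all _ fun τ hτ => ?_)
      ((continuousOn_const.mul ((hk.mono Icc_subset_Ici_self).abs.mul hE)).intervalIntegrable_of_Icc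
        hs)
    rw [Real.norm_eq_abs, abs_mul, abs_neg, abs_mul, abs_exp, mul_right_comm, mul_comm M]
    gcongr
    exact hM τ (Ioc_subset_Icc_self hτ)
  have hexp : exp (-∫ τ in t₀..s, b τ) * exp (∫ τ in t₀..s, b τ) = 1 := by
    rw [← exp_add, neg_add_cancel, exp_zero]
  calc |u' s| = exp (-∫ τ in t₀..s, b τ) * |u' s * exp (∫ τ in t₀..s, b τ)| := by
        rw [abs_mul, abs_exp, mul_left_comm, hexp, mul_one]
    _ ≤ exp (-∫ τ in t₀..s, b τ)
          * (|u' t₀| + M * ∫ τ in t₀..s, |k τ| * exp (∫ x in t₀..τ, b x)) := by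
        rw [hid]
        gcongr
        exact (abs_add_le _ _).trans (by gcongr)
    _ = _ := by ring

theorem abs_le (hb : ContinuousOn b (Ici t₀)) (hk : ContinuousOn k (Ici t₀))
    (hF : IntegrableOn (fun s => exp (-∫ τ in t₀..s, b τ)) (Ici t₀))
    (hG : IntegrableOn (fun s => exp (-∫ τ in t₀..s, b τ)
        * ∫ τ in t₀..s, |k τ| * exp (∫ x in t₀..τ, b x)) (Ici t₀))
    (hG_lt : ∫ s in Ici t₀, exp (-∫ τ in t₀..s, b τ)
        * ∫ τ in t₀..s, |k τ| * exp (∫ x in t₀..τ, b x) < 1 / 2)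
    (hsol : IsSolution t₀ b k u u' u'') {t : ℝ} (ht : t₀ ≤ t) :
    ∀ x ∈ Icc t₀ t,
      |u x| ≤ 2 * (|u t₀| + (∫ s in Ici t₀, exp (-∫ τ in t₀..s, b τ)) * |u' t₀|) := by
  have hG₀ : ∀ s ≥ t₀,
      0 ≤ exp (-∫ τ in t₀..s, b τ) * ∫ τ in t₀..s, |k τ| * exp (∫ x in t₀..τ, b x) :=
    fun s hs => mul_nonneg (exp_pos _).le
      (intervalIntegral.integral_nonneg hs fun τ _ => by positivity)
  set C := ∫ s in Ici t₀, exp (-∫ τ in t₀..s, b τ)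
  set q := ∫ s in Ici t₀, exp (-∫ τ in t₀..s, b τ)
    * ∫ τ in t₀..s, |k τ| * exp (∫ x in t₀..τ, b x)
  have hC₀ : 0 ≤ C := setIntegral_nonneg measurableSet_Ici fun _ _ => (exp_pos _).le
  have hq₀ : 0 ≤ q := setIntegral_nonneg measurableSet_Ici hG₀
  intro x hx
  refine (abs_le_div_of_abs_le_add_mul_sup (A := |u t₀| + C * |u' t₀|) (q := q) ht
    (hsol.continuousOn.mono Icc_subset_Ici_self) (by linarith) (fun z hz M hM => ?_) x hx).trans
    ?_
  · have hM₀ : 0 ≤ M := (abs_nonneg _).trans (hM t₀ (left_mem_Icc.2 hz.1))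
    have := abs_le_of_abs_deriv_le hz.1 (fun s hs => hsol.hasDerivAt s hs.1)
      (hsol.continuousOn_deriv.mono Icc_subset_Ici_self) hF hG (fun _ _ => (exp_pos _).le)
      hG₀ (abs_nonneg _) hM₀
      fun s hs => hsol.abs_deriv_le hb hk hs.1 fun τ hτ => hM τ ⟨hτ.1, hτ.2.trans hs.2⟩
    linarith
  · rw [div_le_iff₀ (by linarith)]
    nlinarith [abs_nonneg (u t₀), abs_nonneg (u' t₀), mul_nonneg hC₀ (abs_nonneg (u' t₀))]

end IsSolution

theorem isStableZero_of_linear_bound {t₀ K : ℝ} {b k : ℝ → ℝ} (hK : 0 ≤ K)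
    (h : ∀ u u' u'', IsSolution t₀ b k u u' u'' →
      ∀ t ≥ t₀, |u t| + |u' t| ≤ K * (|u t₀| + |u' t₀|)) :
    IsStableZero t₀ b k := by
  intro ε hε
  refine ⟨ε / (2 * K + 1), by positivity, fun u u' u'' hu hu' hode h₀ t ht => ?_⟩
  have hδ : 0 < ε / (2 * K + 1) := by positivity
  have hu₀ : |u t₀| < ε / (2 * K + 1) := abs_lt_of_sq_lt_sq (by nlinarith) hδ.le
  have hu'₀ : |u' t₀| < ε / (2 * K + 1) := abs_lt_of_sq_lt_sq (by nlinarith) hδ.le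
  have hsum : |u t| + |u' t| < ε := by
    calc |u t| + |u' t| ≤ K * (|u t₀| + |u' t₀|) := h u u' u'' ⟨hu, hu', hode⟩ t ht
      _ ≤ 2 * K * (ε / (2 * K + 1)) := by nlinarith
      _ < ε := by
        rw [← mul_div_assoc, div_lt_iff₀ (by positivity)]
        nlinarith
  nlinarith [sq_abs (u t), sq_abs (u' t), abs_nonneg (u t), abs_nonneg (u' t)]

theorem stmt_8 (t₀ : ℝ) (b k : ℝ → ℝ)
    (hb : ContinuousOn b (Ici t₀)) (hk : ContinuousOn k (Ici t₀))
    (hfix1 : IntegrableOn (fun s => Real.exp (-∫ τ in t₀..s, b τ)) (Ici t₀))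
    (hfix2 : ∀ s ≥ t₀, Real.exp (-∫ τ in t₀..s, b τ) < 2)
    (hfix3int : IntegrableOn (fun s => Real.exp (-∫ τ in t₀..s, b τ)
        * ∫ τ in t₀..s, |k τ| * Real.exp (∫ x in t₀..τ, b x)) (Ici t₀))
    (hfix3 : ∫ s in Ici t₀, Real.exp (-∫ τ in t₀..s, b τ)
        * ∫ τ in t₀..s, |k τ| * Real.exp (∫ x in t₀..τ, b x) < 1 / 2)
    (hfix4 : ∀ s ≥ t₀, Real.exp (-∫ τ in t₀..s, b τ)
        * ∫ τ in t₀..s, |k τ| * Real.exp (∫ x in t₀..τ, b x) < 1 / 2) :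
    IsStableZero t₀ b k := by
  set C := ∫ s in Ici t₀, exp (-∫ τ in t₀..s, b τ)
  have hC : 0 ≤ C := setIntegral_nonneg measurableSet_Ici fun _ _ => (exp_pos _).le
  refine isStableZero_of_linear_bound (K := 3 * C + 3) (by positivity)
    fun u u' u'' hsol t ht => ?_
  have hu := hsol.abs_le hb hk hfix1 hfix3int hfix3 ht
  have hu' := hsol.abs_deriv_le hb hk ht hu
  have hF := mul_le_mul_of_nonneg_left (hfix2 t ht).le (abs_nonneg (u' t₀))
  have hA : 0 ≤ 2 * (|u t₀| + C * |u' t₀|) := by positivity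
  have hFG := mul_le_mul_of_nonneg_left (hfix4 t ht).le hA
  nlinarith [hu t ⟨ht, le_rfl⟩, abs_nonneg (u t₀), abs_nonneg (u' t₀)]
end

section
/- For every ε > 0 there exist continuous functions b(t) = 4/(t+α) and k(t) = -1/(t+α)³ with α = max(1, √(5/ε)) such that the zero solution of u'' + b u' + k u = 0 is stable, while the eigenvalues λ±(t) = (-b(t) ± √(b(t)² - 4k(t)))/2 of the associated matrix satisfy |dλ±/dt| < ε for all t ≥ 0. -/
/-!
Write `s = t + α ≥ 1`, so that the equation reads `u'' + (4/s) u' - u/s³ = 0`. With `z = s u'`,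
the weighted quadratic form `G = (u² + (2/3) u z + z²) exp (6/s)` satisfies
`s² G' = -exp (6/s) (16/3 u² + 2 u z + (16/3 s + 6) z²) ≤ 0` along solutions, and the form is
comparable to `u² + z²`; hence `u² + u'²` at time `t` is at most a constant times its value at the
initial time, which is stability.

For the eigenvalues, `|b'| = 4/s²` and, since `√(b² - 4k) ≥ 4/s`, the derivative of the square root
is at most `11/(2s²)` in absolute value; so `|λ±'| ≤ 19/(4s²)`, and `α² ≥ 5/ε` makes this less
than `ε`.
-/

open Set Real MeasureTheory Filter

/-- α(ε) = max(1, √(5/ε)). -/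
noncomputable def alp (ε : ℝ) : ℝ := max 1 (Real.sqrt (5 / ε))

noncomputable def bfun (ε t : ℝ) : ℝ := 4 / (t + alp ε)

noncomputable def kfun (ε t : ℝ) : ℝ := -1 / (t + alp ε) ^ 3

/-- Eigenvalues λ± of the matrix [[0,1],[-k,-b]]. -/
noncomputable def lamP (ε t : ℝ) : ℝ :=
  (-bfun ε t + Real.sqrt (bfun ε t ^ 2 - 4 * kfun ε t)) / 2

noncomputable def lamM (ε t : ℝ) : ℝ :=
  (-bfun ε t - Real.sqrt (bfun ε t ^ 2 - 4 * kfun ε t)) / 2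

lemma isStableZero_of_sq_add_sq_le {t₀ : ℝ} {b k : ℝ → ℝ} (C : ℝ) (hC : 0 < C)
    (hbound : ∀ u u' u'' : ℝ → ℝ,
      (∀ t ≥ t₀, HasDerivAt u (u' t) t) →
      (∀ t ≥ t₀, HasDerivAt u' (u'' t) t) →
      (∀ t ≥ t₀, u'' t + b t * u' t + k t * u t = 0) →
      ∀ t ≥ t₀, u t ^ 2 + u' t ^ 2 ≤ C * (u t₀ ^ 2 + u' t₀ ^ 2)) :
    IsStableZero t₀ b k := by
  intro ε hε
  refine ⟨ε / √C, by positivity, fun u u' u'' hu hu' hode h₀ t ht => ?_⟩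
  calc u t ^ 2 + u' t ^ 2 ≤ C * (u t₀ ^ 2 + u' t₀ ^ 2) := hbound u u' u'' hu hu' hode t ht
    _ < C * (ε / √C) ^ 2 := by gcongr
    _ = ε ^ 2 := by rw [div_pow, sq_sqrt hC.le]; field_simp

noncomputable def lyapForm (x y : ℝ) : ℝ := x ^ 2 + 2 / 3 * x * y + y ^ 2

lemma two_thirds_mul_le_lyapForm (x y : ℝ) : 2 / 3 * (x ^ 2 + y ^ 2) ≤ lyapForm x y := by
  unfold lyapForm; nlinarith [sq_nonneg (x + y)]

lemma lyapForm_le (x y : ℝ) : lyapForm x y ≤ 4 / 3 * (x ^ 2 + y ^ 2) := by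
  unfold lyapForm; nlinarith [sq_nonneg (x - y)]

noncomputable def lyapunov (a : ℝ) (u u' : ℝ → ℝ) (t : ℝ) : ℝ :=
  lyapForm (u t) ((t + a) * u' t) * exp (6 / (t + a))

section Lyapunov

variable {a t₀ : ℝ} {u u' u'' : ℝ → ℝ}

lemma hasDerivAt_lyapunov {t : ℝ} (hs : 0 < t + a) (hu : HasDerivAt u (u' t) t)
    (hu' : HasDerivAt u' (u'' t) t)
    (hode : u'' t + 4 / (t + a) * u' t + -1 / (t + a) ^ 3 * u t = 0) :
    HasDerivAt (lyapunov a u u')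
      (-(16 / 3 * u t ^ 2 + 2 * u t * ((t + a) * u' t)
          + (16 / 3 * (t + a) + 6) * ((t + a) * u' t) ^ 2) / (t + a) ^ 2 * exp (6 / (t + a))) t := by
  have hs' : HasDerivAt (fun x => x + a) 1 t := (hasDerivAt_id t).add_const a
  have hz := hs'.fun_mul hu'
  have hw := ((hasDerivAt_const t (6 : ℝ)).fun_div hs' hs.ne').exp
  refine ((((hu.pow 2).add ((hu.const_mul (2 / 3 : ℝ)).fun_mul hz)).add (hz.pow 2)).fun_mul
    hw).congr_deriv ?_
  have hu'' : u'' t = -(4 / (t + a)) * u' t + u t / (t + a) ^ 3 := by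
    field_simp at hode ⊢; linarith
  rw [hu'']
  simp only [Pi.add_apply, Pi.pow_apply]
  field_simp
  ring

lemma lyapunov_antitoneOn (hu : ∀ t ≥ t₀, HasDerivAt u (u' t) t)
    (hu' : ∀ t ≥ t₀, HasDerivAt u' (u'' t) t)
    (hode : ∀ t ≥ t₀, u'' t + 4 / (t + a) * u' t + -1 / (t + a) ^ 3 * u t = 0)
    (h₀ : 0 < t₀ + a) : AntitoneOn (lyapunov a u u') (Ici t₀) := by
  have hderiv : ∀ t ∈ Ici t₀, HasDerivAt (lyapunov a u u') _ t := fun t ht =>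
    hasDerivAt_lyapunov (by simp only [mem_Ici] at ht; linarith) (hu t ht) (hu' t ht) (hode t ht)
  refine antitoneOn_of_hasDerivWithinAt_nonpos (convex_Ici t₀)
    (fun t ht => (hderiv t ht).continuousAt.continuousWithinAt)
    (fun t ht => (hderiv t (interior_subset ht)).hasDerivWithinAt) fun t ht => ?_
  rw [interior_Ici, mem_Ioi] at ht
  have hs : 0 < t + a := by linarith
  set x := u t
  set z := (t + a) * u' t
  have hQ : 0 ≤ 16 / 3 * x ^ 2 + 2 * x * z + (16 / 3 * (t + a) + 6) * z ^ 2 := by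
    nlinarith [sq_nonneg (x + z), mul_nonneg hs.le (sq_nonneg z)]
  exact mul_nonpos_of_nonpos_of_nonneg (div_nonpos_of_nonpos_of_nonneg (neg_nonpos.2 hQ)
    (by positivity)) (exp_pos _).le

lemma sq_add_sq_le_of_shifted_ode (hu : ∀ t ≥ t₀, HasDerivAt u (u' t) t)
    (hu' : ∀ t ≥ t₀, HasDerivAt u' (u'' t) t)
    (hode : ∀ t ≥ t₀, u'' t + 4 / (t + a) * u' t + -1 / (t + a) ^ 3 * u t = 0)
    (h₁ : 1 ≤ t₀ + a) {t : ℝ} (ht : t₀ ≤ t) :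
    u t ^ 2 + u' t ^ 2 ≤ 2 * exp (6 / (t₀ + a)) * (t₀ + a) ^ 2 * (u t₀ ^ 2 + u' t₀ ^ 2) := by
  have hs : 1 ≤ t + a := by linarith
  calc u t ^ 2 + u' t ^ 2 ≤ u t ^ 2 + ((t + a) * u' t) ^ 2 := by
        nlinarith [mul_le_mul_of_nonneg_right hs (sq_nonneg (u' t))]
    _ ≤ 3 / 2 * lyapForm (u t) ((t + a) * u' t) := by
        linarith [two_thirds_mul_le_lyapForm (u t) ((t + a) * u' t)]
    _ ≤ 3 / 2 * lyapunov a u u' t := by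
        gcongr
        exact le_mul_of_one_le_right ((two_thirds_mul_le_lyapForm _ _).trans' (by positivity))
          (one_le_exp (by positivity))
    _ ≤ 3 / 2 * lyapunov a u u' t₀ := by
        gcongr
        exact lyapunov_antitoneOn hu hu' hode (by linarith) self_mem_Ici ht ht
    _ ≤ 3 / 2 * (4 / 3 * (u t₀ ^ 2 + ((t₀ + a) * u' t₀) ^ 2) * exp (6 / (t₀ + a))) :=
        mul_le_mul_of_nonneg_left
          (mul_le_mul_of_nonneg_right (lyapForm_le _ _) (exp_pos _).le) (by norm_num)
    _ ≤ 2 * exp (6 / (t₀ + a)) * (t₀ + a) ^ 2 * (u t₀ ^ 2 + u' t₀ ^ 2) := by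
        have h2 : 1 ≤ (t₀ + a) ^ 2 := one_le_pow₀ h₁
        have hexp := exp_pos (6 / (t₀ + a))
        nlinarith [mul_le_mul_of_nonneg_right h2 (mul_nonneg hexp.le (sq_nonneg (u t₀)))]

end Lyapunov

lemma isStableZero_shifted {t₀ a : ℝ} (h₁ : 1 ≤ t₀ + a) :
    IsStableZero t₀ (fun t => 4 / (t + a)) (fun t => -1 / (t + a) ^ 3) :=
  isStableZero_of_sq_add_sq_le _ (by positivity) fun _ _ _ hu hu' hode _ ht =>
    sq_add_sq_le_of_shifted_ode hu hu' hode h₁ ht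

lemma one_le_alp (ε : ℝ) : 1 ≤ alp ε := le_max_left _ _

lemma five_le_mul_alp_sq {ε : ℝ} (hε : 0 < ε) : 5 ≤ ε * alp ε ^ 2 := by
  have h : √(5 / ε) ^ 2 ≤ alp ε ^ 2 := pow_le_pow_left₀ (sqrt_nonneg _) (le_max_right _ _) 2
  rw [sq_sqrt (by positivity), div_le_iff₀ hε] at h
  linarith

noncomputable def discr (ε t : ℝ) : ℝ := bfun ε t ^ 2 - 4 * kfun ε t

lemma abs_neg_add_div_two_lt {x y c : ℝ} (h : |x| + |y| < 2 * c) : |(-x + y) / 2| < c := by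
  rw [abs_div, abs_two]
  linarith [abs_add_le (-x) y, abs_neg x]

lemma abs_neg_sub_div_two_lt {x y c : ℝ} (h : |x| + |y| < 2 * c) : |(-x - y) / 2| < c := by
  rw [abs_div, abs_two]
  linarith [abs_sub (-x) y, abs_neg x]

section Eigenvalues

variable {ε t : ℝ}

lemma discr_eq (ht : t + alp ε ≠ 0) :
    discr ε t = 16 / (t + alp ε) ^ 2 + 4 / (t + alp ε) ^ 3 := by
  unfold discr bfun kfun
  field_simp
  ring

lemma hasDerivAt_bfun (ht : t + alp ε ≠ 0) :
    HasDerivAt (bfun ε) (-4 / (t + alp ε) ^ 2) t := by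
  have := (hasDerivAt_const t (4 : ℝ)).fun_div ((hasDerivAt_id t).add_const (alp ε)) ht
  exact this.congr_deriv (by simp)

lemma hasDerivAt_discr (ht : t + alp ε ≠ 0) :
    HasDerivAt (discr ε) (-(32 * (t + alp ε) + 12) / (t + alp ε) ^ 4) t := by
  have hs := (hasDerivAt_id' t).add_const (alp ε)
  have hk := (hasDerivAt_const t (-1 : ℝ)).fun_div (hs.fun_pow 3) (pow_ne_zero 3 ht)
  refine (((hasDerivAt_bfun ht).pow 2).sub (hk.const_mul 4)).congr_deriv ?_
  simp only [bfun]
  push_cast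
  field_simp
  ring

lemma four_div_le_sqrt_discr (ht : 0 < t + alp ε) : 4 / (t + alp ε) ≤ √(discr ε t) := by
  rw [le_sqrt (by positivity) (by rw [discr_eq ht.ne']; positivity), discr_eq ht.ne', div_pow]
  have : 0 ≤ 4 / (t + alp ε) ^ 3 := by positivity
  norm_num
  linarith

lemma abs_deriv_sqrt_discr_le (ht : 1 ≤ t + alp ε) :
    |-(32 * (t + alp ε) + 12) / (t + alp ε) ^ 4 / (2 * √(discr ε t))|
      ≤ 11 / (2 * (t + alp ε) ^ 2) := by
  have hs : 0 < t + alp ε := by linarith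
  have hr := four_div_le_sqrt_discr hs
  have hr0 : 0 < √(discr ε t) := lt_of_lt_of_le (by positivity) hr
  rw [abs_div, abs_div, abs_neg, abs_of_pos (by positivity), abs_of_pos (by positivity),
    abs_of_pos (by positivity)]
  set s := t + alp ε
  calc (32 * s + 12) / s ^ 4 / (2 * √(discr ε t)) ≤ (32 * s + 12) / s ^ 4 / (2 * (4 / s)) := by
        gcongr
    _ = (8 * s + 3) / (2 * s ^ 3) := by field_simp; ring
    _ ≤ 11 / (2 * s ^ 2) := by
        rw [div_le_div_iff₀ (by positivity) (by positivity)]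
        nlinarith [pow_pos hs 2, mul_le_mul_of_nonneg_left ht (pow_pos hs 3).le]

lemma hasDerivAt_sqrt_discr (ht : 0 < t + alp ε) :
    HasDerivAt (fun t => √(discr ε t))
      (-(32 * (t + alp ε) + 12) / (t + alp ε) ^ 4 / (2 * √(discr ε t))) t :=
  (hasDerivAt_discr ht.ne').sqrt (by rw [discr_eq ht.ne']; positivity : 0 < discr ε t).ne'

lemma abs_deriv_bfun_add_abs_deriv_sqrt_discr_lt (hε : 0 < ε) (ht : 0 ≤ t) :
    |-4 / (t + alp ε) ^ 2| + |-(32 * (t + alp ε) + 12) / (t + alp ε) ^ 4 / (2 * √(discr ε t))|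
      < 2 * ε := by
  have hs : 1 ≤ t + alp ε := by linarith [one_le_alp ε]
  have hε_s : 5 ≤ ε * (t + alp ε) ^ 2 :=
    (five_le_mul_alp_sq hε).trans (mul_le_mul_of_nonneg_left
      (pow_le_pow_left₀ (zero_le_one.trans (one_le_alp ε)) (by linarith) 2) hε.le)
  have hb : |-4 / (t + alp ε) ^ 2| = 4 / (t + alp ε) ^ 2 := by
    rw [abs_div, abs_neg, abs_of_pos (by positivity), abs_of_pos (by positivity)]
  calc _ ≤ 4 / (t + alp ε) ^ 2 + 11 / (2 * (t + alp ε) ^ 2) := by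
        rw [hb]; gcongr; exact abs_deriv_sqrt_discr_le hs
    _ = 19 / (2 * (t + alp ε) ^ 2) := by field_simp; ring
    _ < 2 * ε := by
        rw [div_lt_iff₀ (by positivity)]
        linarith

lemma abs_deriv_lamP_lt (hε : 0 < ε) (ht : 0 ≤ t) : |deriv (lamP ε) t| < ε := by
  have hs : 0 < t + alp ε := by linarith [one_le_alp ε]
  have h := abs_deriv_bfun_add_abs_deriv_sqrt_discr_lt hε ht
  have hderiv : HasDerivAt (lamP ε) _ t :=
    ((hasDerivAt_bfun hs.ne').fun_neg.fun_add (hasDerivAt_sqrt_discr hs)).div_const 2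
  rw [hderiv.deriv]
  exact abs_neg_add_div_two_lt h

lemma abs_deriv_lamM_lt (hε : 0 < ε) (ht : 0 ≤ t) : |deriv (lamM ε) t| < ε := by
  have hs : 0 < t + alp ε := by linarith [one_le_alp ε]
  have h := abs_deriv_bfun_add_abs_deriv_sqrt_discr_lt hε ht
  have hderiv : HasDerivAt (lamM ε) _ t :=
    ((hasDerivAt_bfun hs.ne').fun_neg.fun_sub (hasDerivAt_sqrt_discr hs)).div_const 2
  rw [hderiv.deriv]
  exact abs_neg_sub_div_two_lt h

end Eigenvalues

theorem stmt_11 : ∀ ε > (0 : ℝ),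
    ContinuousOn (bfun ε) (Ici (0:ℝ)) ∧ ContinuousOn (kfun ε) (Ici (0:ℝ))
    ∧ IsStableZero 0 (bfun ε) (kfun ε)
    ∧ ∀ t ≥ (0 : ℝ), |deriv (lamP ε) t| < ε ∧ |deriv (lamM ε) t| < ε := by
  intro ε hε
  have hs : ∀ t ∈ Ici (0:ℝ), t + alp ε ≠ 0 := fun t ht => by
    rw [mem_Ici] at ht; linarith [one_le_alp ε]
  exact ⟨continuousOn_const.div (by fun_prop) hs,
    continuousOn_const.div (by fun_prop) fun t ht => pow_ne_zero 3 (hs t ht),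
    isStableZero_shifted (by linarith [one_le_alp ε]),
    fun t ht => ⟨abs_deriv_lamP_lt hε ht, abs_deriv_lamM_lt hε ht⟩⟩
end

section
/- Suppose -k(t) ≥ α > 0 and k'(t) + 2 b(t) k(t) ≥ 0 for all t ≥ t₀. Then the zero solution of u'' + b u' + k u = 0 is unstable: there exist solutions with arbitrarily small initial data (u(t₀), u'(t₀)) with -k(t₀)u(t₀)² < u'(t₀)² for which (u(t), u'(t)) does not remain bounded. -/
open Set Real MeasureTheory Filter

/-!
The equation is the linear system `(u, u')' = A(t) (u, u')`, which has global solutions: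
Picard–Lindelöf gives local solutions whose existence time depends only on a bound for `‖A‖`,
not on the initial value, and uniqueness lets them be glued.

Along a solution the Chetaev function `V = u² + u'² / k` satisfies
`V' = -u'² (k' + 2 b k) / k² ≤ 0`. Start with `u(t₀) = 0` and small `u'(t₀) > 0`, so that
`V(t₀) < 0`. Then `u'² = -k (u² - V) ≥ α (-V(t₀)) > 0` for all `t ≥ t₀`, so `u'` keeps its sign
and stays away from zero, and `u` grows at least linearly.
-/

section LinearODE

variable {E : Type*} [NormedAddCommGroup E] [NormedSpace ℝ E] {A : ℝ → E →L[ℝ] E}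

theorem eqOn_Ioo_of_hasDerivAt_clm {f g : ℝ → E} {a b t₀ : ℝ} (hA : ContinuousOn A (Icc a b))
    (ht₀ : t₀ ∈ Ioo a b) (hf : ∀ t ∈ Ioo a b, HasDerivAt f (A t (f t)) t)
    (hg : ∀ t ∈ Ioo a b, HasDerivAt g (A t (g t)) t) (heq : f t₀ = g t₀) :
    EqOn f g (Ioo a b) := by
  obtain ⟨K, hK⟩ := isCompact_Icc.exists_bound_of_continuousOn hA
  have hlip : ∀ t ∈ Ioo a b, LipschitzOnWith K.toNNReal (A t) univ := fun t ht =>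
    (ContinuousLinearMap.lipschitzWith_of_opNorm_le
      ((hK t (Ioo_subset_Icc_self ht)).trans K.le_coe_toNNReal)).lipschitzOnWith
  exact ODE_solution_unique_of_mem_Ioo hlip ht₀ (fun t ht => ⟨hf t ht, mem_univ _⟩)
    (fun t ht => ⟨hg t ht, mem_univ _⟩) heq

theorem eqOn_inter_of_hasDerivAt_clm {f g : ℝ → E} {a b a' b' c : ℝ} (hA : Continuous A)
    (hf : ∀ t ∈ Ioo a b, HasDerivAt f (A t (f t)) t)
    (hg : ∀ t ∈ Ioo a' b', HasDerivAt g (A t (g t)) t) (hc : c ∈ Ioo a b ∩ Ioo a' b')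
    (heq : f c = g c) : EqOn f g (Ioo a b ∩ Ioo a' b') := by
  rw [Ioo_inter_Ioo] at hc ⊢
  refine eqOn_Ioo_of_hasDerivAt_clm hA.continuousOn hc (fun t ht => hf t ?_)
    (fun t ht => hg t ?_) heq
  · exact Ioo_subset_Ioo le_sup_left inf_le_left ht
  · exact Ioo_subset_Ioo le_sup_right inf_le_right ht

theorem HasDerivAt.piecewise_of_eqOn_inter {F : ℝ → E → E} {U V : Set ℝ}
    [DecidablePred (· ∈ U)] {v w : ℝ → E} (hU : IsOpen U) (hV : IsOpen V)
    (hvw : EqOn v w (U ∩ V)) (hv : ∀ t ∈ U, HasDerivAt v (F t (v t)) t)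
    (hw : ∀ t ∈ V, HasDerivAt w (F t (w t)) t) :
    ∀ t ∈ U ∪ V, HasDerivAt (U.piecewise v w) (F t (U.piecewise v w t)) t := by
  have hUv : EqOn (U.piecewise v w) v U := piecewise_eqOn U v w
  have hVw : EqOn (U.piecewise v w) w V := fun s hs => by
    by_cases h : s ∈ U
    · rw [hUv h, hvw ⟨h, hs⟩]
    · exact piecewise_eq_of_notMem U v w h
  rintro t (ht | ht)
  · rw [hUv ht]
    exact (hv t ht).congr_of_eventuallyEq (hUv.eventuallyEq_of_mem (hU.mem_nhds ht))
  · rw [hVw ht]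
    exact (hw t ht).congr_of_eventuallyEq (hVw.eventuallyEq_of_mem (hV.mem_nhds ht))

theorem exists_hasDerivAt_clm_of_overlap {v w : ℝ → E} {a b a' b' c : ℝ} (hA : Continuous A)
    (hv : ∀ t ∈ Ioo a b, HasDerivAt v (A t (v t)) t)
    (hw : ∀ t ∈ Ioo a' b', HasDerivAt w (A t (w t)) t) (hc : c ∈ Ioo a b ∩ Ioo a' b')
    (hvw : v c = w c) :
    ∃ u : ℝ → E, EqOn u v (Ioo a b) ∧
      ∀ t ∈ Ioo (min a a') (max b b'), HasDerivAt u (A t (u t)) t := by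
  classical
  refine ⟨(Ioo a b).piecewise v w, piecewise_eqOn _ _ _, ?_⟩
  rw [← Ioo_union_Ioo' (hc.2.1.trans hc.1.2) (hc.1.1.trans hc.2.2)]
  exact HasDerivAt.piecewise_of_eqOn_inter isOpen_Ioo isOpen_Ioo
    (eqOn_inter_of_hasDerivAt_clm hA hv hw hc hvw) hv hw

/-- The local solutions are glued on at `t₀ ± r`. -/
theorem exists_hasDerivAt_clm_Ioo_of_local {v : ℝ → E} {t₀ r ε : ℝ} (hA : Continuous A)
    (hr : 0 ≤ r) (hε : 0 < ε)
    (hloc : ∀ c, |c - t₀| ≤ r → ∀ y : E,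
      ∃ w : ℝ → E, w c = y ∧ ∀ t ∈ Ioo (c - ε) (c + ε), HasDerivAt w (A t (w t)) t)
    (hv : ∀ t ∈ Ioo (t₀ - r - ε / 2) (t₀ + r + ε / 2), HasDerivAt v (A t (v t)) t) :
    ∃ x : ℝ → E, x t₀ = v t₀ ∧
      ∀ t ∈ Ioo (t₀ - r - ε) (t₀ + r + ε), HasDerivAt x (A t (x t)) t := by
  obtain ⟨wr, hwr, hwr'⟩ := hloc (t₀ + r) (by simp [abs_of_nonneg hr]) (v (t₀ + r))
  obtain ⟨u, hu, hu'⟩ := exists_hasDerivAt_clm_of_overlap hA hv hwr'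
    ⟨⟨by linarith, by linarith⟩, ⟨by linarith, by linarith⟩⟩ hwr.symm
  obtain ⟨wl, hwl, hwl'⟩ := hloc (t₀ - r) (by simp [abs_of_nonneg hr]) (u (t₀ - r))
  obtain ⟨x, hx, hx'⟩ := exists_hasDerivAt_clm_of_overlap (a := t₀ - r - ε / 2)
    (b := t₀ + r + ε) hA (fun t ht => hu' t (Ioo_subset_Ioo (min_le_of_left_le le_rfl)
      (le_max_of_le_right le_rfl) ht)) hwl'
    ⟨⟨by linarith, by linarith⟩, ⟨by linarith, by linarith⟩⟩ hwl.symm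
  refine ⟨x, ?_, fun t ht => hx' t (Ioo_subset_Ioo (min_le_of_right_le le_rfl)
    (le_max_of_le_left le_rfl) ht)⟩
  rw [hx ⟨by linarith, by linarith⟩, hu ⟨by linarith, by linarith⟩]

variable [CompleteSpace E]

/-- The existence time does not depend on the initial value: on the ball of radius `‖x‖` about
`x` the field is bounded by `2 M ‖x‖`. -/
theorem exists_hasDerivAt_clm_Ioo_of_norm_le {c ε M : ℝ} (x : E)
    (hA : ContinuousOn A (Icc (c - ε) (c + ε))) (hε : 0 < ε)
    (hM : ∀ t ∈ Icc (c - ε) (c + ε), ‖A t‖ ≤ M) (hMε : 2 * M * ε ≤ 1) :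
    ∃ w : ℝ → E, w c = x ∧ ∀ t ∈ Ioo (c - ε) (c + ε), HasDerivAt w (A t (w t)) t := by
  have hM0 : 0 ≤ M := (norm_nonneg _).trans (hM c ⟨by linarith, by linarith⟩)
  have hpl : IsPicardLindelof (fun t => A t) (tmin := c - ε) (tmax := c + ε)
      ⟨c, by constructor <;> linarith⟩ x ‖x‖₊ 0 (2 * M * ‖x‖).toNNReal M.toNNReal := by
    refine ⟨fun t ht => ?_, fun y _ => ?_, fun t ht y hy => ?_, ?_⟩
    · exact (ContinuousLinearMap.lipschitzWith_of_opNorm_le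
        ((hM t ht).trans M.le_coe_toNNReal)).lipschitzOnWith
    · exact (continuous_eval_const y).comp_continuousOn hA
    · have hy' : ‖y‖ ≤ 2 * ‖x‖ := by
        have := norm_le_norm_add_norm_sub' y x
        rw [Metric.mem_closedBall, dist_eq_norm] at hy
        simp only [coe_nnnorm] at hy
        linarith
      calc ‖A t y‖ ≤ ‖A t‖ * ‖y‖ := (A t).le_opNorm y
        _ ≤ M * (2 * ‖x‖) := mul_le_mul (hM t ht) hy' (norm_nonneg _) hM0
        _ = 2 * M * ‖x‖ := by ring
        _ ≤ _ := Real.le_coe_toNNReal _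
    · rw [Real.coe_toNNReal _ (by positivity)]
      simp only [add_sub_cancel_left, sub_sub_cancel, max_self, coe_nnnorm, NNReal.coe_zero,
        sub_zero]
      nlinarith [norm_nonneg x]
  obtain ⟨w, hw₀, hw⟩ := hpl.exists_eq_forall_mem_Icc_hasDerivWithinAt₀
  exact ⟨w, hw₀, fun t ht =>
    (hw t (Ioo_subset_Icc_self ht)).hasDerivAt (Icc_mem_nhds ht.1 ht.2)⟩

theorem exists_hasDerivAt_clm_Ioo (hA : Continuous A) (t₀ : ℝ) (x₀ : E) {T : ℝ} (hT : 0 ≤ T) :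
    ∃ x : ℝ → E, x t₀ = x₀ ∧ ∀ t ∈ Ioo (t₀ - T) (t₀ + T), HasDerivAt x (A t (x t)) t := by
  obtain ⟨M, hM⟩ := isCompact_Icc.exists_bound_of_continuousOn
    (s := Icc (t₀ - T - 1) (t₀ + T + 1)) hA.continuousOn
  have hM0 : 0 ≤ M := (norm_nonneg _).trans (hM t₀ ⟨by linarith, by linarith⟩)
  set ε := 1 / (2 * M + 2) with hε
  have hε0 : 0 < ε := by positivity
  have hε1 : ε ≤ 1 := by rw [hε, div_le_one (by positivity)]; linarith
  have hMε : 2 * M * ε ≤ 1 := by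
    rw [hε, ← mul_div_assoc, mul_one, div_le_one (by positivity)]; linarith
  have hloc : ∀ c, |c - t₀| ≤ T → ∀ y : E,
      ∃ w : ℝ → E, w c = y ∧ ∀ t ∈ Ioo (c - ε) (c + ε), HasDerivAt w (A t (w t)) t := by
    intro c hc y
    rw [abs_le] at hc
    exact exists_hasDerivAt_clm_Ioo_of_norm_le y hA.continuousOn hε0
      (fun t ht => hM t ⟨by linarith [ht.1], by linarith [ht.2]⟩) hMε
  have hgrow : ∀ n : ℕ, n * ε / 2 ≤ T → ∃ x : ℝ → E, x t₀ = x₀ ∧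
      ∀ t ∈ Ioo (t₀ - (n + 2) * ε / 2) (t₀ + (n + 2) * ε / 2), HasDerivAt x (A t (x t)) t := by
    intro n
    induction n with
    | zero =>
      intro _
      obtain ⟨w, hw₀, hw⟩ := hloc t₀ (by simpa using hT) x₀
      exact ⟨w, hw₀, fun t ht => hw t (by simpa using ht)⟩
    | succ n ih =>
      intro hn
      push_cast at hn ⊢
      obtain ⟨v, hv₀, hv⟩ := ih (by linarith)
      obtain ⟨x, hx₀, hx⟩ := exists_hasDerivAt_clm_Ioo_of_local (r := (n + 1) * ε / 2) hA
        (by positivity) hε0 (fun c hc => hloc c (hc.trans hn))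
        (fun t ht => hv t (Ioo_subset_Ioo (by linarith) (by linarith) ht))
      exact ⟨x, hx₀.trans hv₀, fun t ht => hx t (Ioo_subset_Ioo (by linarith) (by linarith) ht)⟩
  have hfloor := Nat.floor_le (a := 2 * T / ε) (by positivity)
  have hfloor' := Nat.lt_floor_add_one (2 * T / ε)
  rw [le_div_iff₀ hε0] at hfloor
  rw [div_lt_iff₀ hε0] at hfloor'
  obtain ⟨x, hx₀, hx⟩ := hgrow ⌊2 * T / ε⌋₊ (by linarith)
  exact ⟨x, hx₀, fun t ht => hx t (Ioo_subset_Ioo (by linarith) (by linarith) ht)⟩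

theorem exists_hasDerivAt_clm (hA : Continuous A) (t₀ : ℝ) (x₀ : E) :
    ∃ x : ℝ → E, x t₀ = x₀ ∧ ∀ t, HasDerivAt x (A t (x t)) t := by
  choose v hv₀ hv using fun n : ℕ => exists_hasDerivAt_clm_Ioo hA t₀ x₀ n.cast_nonneg
  have hagree : ∀ m n : ℕ, ∀ t ∈ Ioo (t₀ - m) (t₀ + m) ∩ Ioo (t₀ - n) (t₀ + n),
      v m t = v n t :=
    fun m n t ht => eqOn_inter_of_hasDerivAt_clm hA (hv m) (hv n)
      ⟨⟨by linarith [ht.1.1, ht.1.2], by linarith [ht.1.1, ht.1.2]⟩,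
        ⟨by linarith [ht.2.1, ht.2.2], by linarith [ht.2.1, ht.2.2]⟩⟩
      ((hv₀ m).trans (hv₀ n).symm) ht
  set N : ℝ → ℕ := fun t => ⌈|t - t₀|⌉₊ + 1 with hN
  have hmem : ∀ t, t ∈ Ioo (t₀ - N t) (t₀ + N t) := fun t => by
    have h := (Nat.le_ceil |t - t₀|).trans_lt (lt_add_one (⌈|t - t₀|⌉₊ : ℝ))
    rw [abs_lt] at h
    push_cast [hN]
    constructor <;> linarith
  refine ⟨fun t => v (N t) t, by simpa [hN] using hv₀ 1, fun t => ?_⟩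
  refine (hv (N t) t (hmem t)).congr_of_eventuallyEq ?_
  filter_upwards [isOpen_Ioo.mem_nhds (hmem t)] with s hs using hagree _ _ s ⟨hmem s, hs⟩

end LinearODE

theorem exists_hasDerivAt_secondOrder {p q : ℝ → ℝ} (hp : Continuous p) (hq : Continuous q)
    (t₀ u₀ v₀ : ℝ) : ∃ u u' : ℝ → ℝ, u t₀ = u₀ ∧ u' t₀ = v₀ ∧
      ∀ t, HasDerivAt u (u' t) t ∧ HasDerivAt u' (-p t * u' t - q t * u t) t := by
  let A : ℝ → ℝ × ℝ →L[ℝ] ℝ × ℝ := fun t =>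
    .inl ℝ ℝ ℝ ∘L .snd ℝ ℝ ℝ - p t • (.inr ℝ ℝ ℝ ∘L .snd ℝ ℝ ℝ) - q t • (.inr ℝ ℝ ℝ ∘L .fst ℝ ℝ ℝ)
  have hA : Continuous A := by fun_prop
  obtain ⟨x, hx₀, hx⟩ := exists_hasDerivAt_clm hA t₀ (u₀, v₀)
  have hAx : ∀ t, A t (x t) = ((x t).2, -p t * (x t).2 - q t * (x t).1) := fun t => by
    ext <;> simp [A]
  refine ⟨fun t => (x t).1, fun t => (x t).2, by simp [hx₀], by simp [hx₀], fun t => ⟨?_, ?_⟩⟩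
  · have h := (hasFDerivAt_fst (𝕜 := ℝ)).comp_hasDerivAt t (hx t)
    rwa [hAx] at h
  · have h := (hasFDerivAt_snd (𝕜 := ℝ)).comp_hasDerivAt t (hx t)
    rwa [hAx] at h

theorem ContinuousOn.comp_max_const {f : ℝ → ℝ} {a : ℝ} (hf : ContinuousOn f (Ici a)) :
    Continuous fun t => f (max t a) :=
  hf.comp_continuous (continuous_id.max continuous_const) fun t => le_max_right t a

section Chetaev

variable {t₀ : ℝ} {b k k' u u' u'' : ℝ → ℝ}

theorem antitoneOn_chetaev (hk : ∀ t ≥ t₀, HasDerivAt k (k' t) t) (hk0 : ∀ t ≥ t₀, k t ≠ 0)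
    (hpos : ∀ t ≥ t₀, 0 ≤ k' t + 2 * b t * k t) (hu : ∀ t ≥ t₀, HasDerivAt u (u' t) t)
    (hu' : ∀ t ≥ t₀, HasDerivAt u' (u'' t) t)
    (heq : ∀ t ≥ t₀, u'' t + b t * u' t + k t * u t = 0) :
    AntitoneOn (fun t => u t ^ 2 + u' t ^ 2 / k t) (Ici t₀) := by
  have hV : ∀ t ≥ t₀, HasDerivAt (fun t => u t ^ 2 + u' t ^ 2 / k t)
      (-(u' t ^ 2 * (k' t + 2 * b t * k t)) / k t ^ 2) t := fun t ht => by
    refine (((hu t ht).fun_pow 2).fun_add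
      (((hu' t ht).fun_pow 2).fun_div (hk t ht) (hk0 t ht))).congr_deriv ?_
    rw [show u'' t = -b t * u' t - k t * u t by linarith [heq t ht]]
    field_simp [hk0 t ht]
    ring
  refine antitoneOn_of_hasDerivWithinAt_nonpos (convex_Ici t₀)
    (f' := fun t => -(u' t ^ 2 * (k' t + 2 * b t * k t)) / k t ^ 2)
    (fun t ht => (hV t ht).continuousAt.continuousWithinAt) (fun t ht => ?_) (fun t ht => ?_)
  <;> rw [interior_Ici] at ht
  · exact (hV t ht.le).hasDerivWithinAt
  · exact div_nonpos_of_nonpos_of_nonneg (neg_nonpos.mpr (mul_nonneg (sq_nonneg _)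
      (hpos t ht.le))) (sq_nonneg _)

theorem tendsto_atTop_of_le_deriv {m : ℝ} (hm : 0 < m) (hu : ∀ t ≥ t₀, HasDerivAt u (u' t) t)
    (hmu : ∀ t ≥ t₀, m ≤ u' t) : Tendsto u atTop atTop := by
  have hmono : MonotoneOn (fun t => u t - m * t) (Ici t₀) := by
    have hd : ∀ t ≥ t₀, HasDerivAt (fun t => u t - m * t) (u' t - m) t := fun t ht => by
      simpa using (hu t ht).fun_sub ((hasDerivAt_id' t).const_mul m)
    refine monotoneOn_of_hasDerivWithinAt_nonneg (convex_Ici t₀) (f' := fun t => u' t - m)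
      (fun t ht => (hd t ht).continuousAt.continuousWithinAt) (fun t ht => ?_) (fun t ht => ?_)
    <;> rw [interior_Ici] at ht
    · exact (hd t ht.le).hasDerivWithinAt
    · linarith [hmu t ht.le]
  refine tendsto_atTop_mono' atTop ?_ (tendsto_atTop_add_const_left atTop (u t₀ - m * t₀)
    (tendsto_id.const_mul_atTop hm))
  filter_upwards [eventually_ge_atTop t₀] with t ht
  have := hmono self_mem_Ici ht ht
  simp only [id] at this ⊢
  linarith

theorem not_bounded_of_chetaev {α : ℝ} (hα : 0 < α) (hk : ∀ t ≥ t₀, HasDerivAt k (k' t) t)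
    (hkα : ∀ t ≥ t₀, α ≤ -k t) (hpos : ∀ t ≥ t₀, 0 ≤ k' t + 2 * b t * k t)
    (hu : ∀ t ≥ t₀, HasDerivAt u (u' t) t) (hu' : ∀ t ≥ t₀, HasDerivAt u' (u'' t) t)
    (heq : ∀ t ≥ t₀, u'' t + b t * u' t + k t * u t = 0)
    (hV₀ : u t₀ ^ 2 + u' t₀ ^ 2 / k t₀ < 0) (hu'₀ : 0 < u' t₀) :
    ¬ ∃ C : ℝ, ∀ t ≥ t₀, u t ^ 2 + u' t ^ 2 ≤ C := by
  have hkneg : ∀ t ≥ t₀, k t < 0 := fun t ht => by linarith [hkα t ht]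
  have hanti := antitoneOn_chetaev hk (fun t ht => (hkneg t ht).ne) hpos hu hu' heq
  set c := -(u t₀ ^ 2 + u' t₀ ^ 2 / k t₀) with hc
  have hc0 : 0 < α * c := mul_pos hα (by linarith)
  have hsq : ∀ t ≥ t₀, α * c ≤ u' t ^ 2 := fun t ht => by
    have hVt : u t ^ 2 + u' t ^ 2 / k t ≤ -c := by
      rw [hc, neg_neg]; exact hanti self_mem_Ici ht ht
    have h := (div_le_iff_of_neg (hkneg t ht)).mp
      (show u' t ^ 2 / k t ≤ -c by nlinarith [sq_nonneg (u t)])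
    nlinarith [hkα t ht]
  have hu'pos : ∀ t ≥ t₀, 0 < u' t := fun t ht => by
    by_contra! h
    obtain ⟨s, hs, hs0⟩ := isPreconnected_Ici.intermediate_value (mem_Ici.mpr ht) self_mem_Ici
      (fun s hs => (hu' s hs).continuousAt.continuousWithinAt) ⟨h, hu'₀.le⟩
    have := hsq s hs
    rw [hs0] at this
    linarith
  have hm : ∀ t ≥ t₀, √(α * c) ≤ u' t := fun t ht => by
    rw [← Real.sqrt_sq (hu'pos t ht).le]
    exact Real.sqrt_le_sqrt (hsq t ht)
  rintro ⟨C, hC⟩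
  obtain ⟨t, hCt, ht⟩ := (((tendsto_atTop_of_le_deriv (Real.sqrt_pos.mpr hc0) hu
    hm).eventually_gt_atTop (max C 1)).and (eventually_ge_atTop t₀)).exists
  nlinarith [hC t ht, le_max_left C 1, le_max_right C 1, sq_nonneg (u' t)]

theorem exists_small_unbounded_solution {α : ℝ} (hα : 0 < α) (hb : ContinuousOn b (Ici t₀))
    (hk : ∀ t ≥ t₀, HasDerivAt k (k' t) t) (hkα : ∀ t ≥ t₀, α ≤ -k t)
    (hpos : ∀ t ≥ t₀, 0 ≤ k' t + 2 * b t * k t) {δ : ℝ} (hδ : 0 < δ) :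
    ∃ u u' u'' : ℝ → ℝ,
      (∀ t ≥ t₀, HasDerivAt u (u' t) t)
      ∧ (∀ t ≥ t₀, HasDerivAt u' (u'' t) t)
      ∧ (∀ t ≥ t₀, u'' t + b t * u' t + k t * u t = 0)
      ∧ u t₀ ^ 2 + u' t₀ ^ 2 < δ ^ 2
      ∧ -k t₀ * u t₀ ^ 2 < u' t₀ ^ 2
      ∧ ¬ ∃ C : ℝ, ∀ t ≥ t₀, u t ^ 2 + u' t ^ 2 ≤ C := by
  have hkc : ContinuousOn k (Ici t₀) := fun t ht => (hk t ht).continuousAt.continuousWithinAt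
  have hkt₀ : k t₀ < 0 := by linarith [hkα t₀ le_rfl]
  obtain ⟨u, u', hu₀, hu'₀, hu⟩ :=
    exists_hasDerivAt_secondOrder hb.comp_max_const hkc.comp_max_const t₀ 0 (δ / 2)
  have heq : ∀ t ≥ t₀,
      (-b (max t t₀) * u' t - k (max t t₀) * u t) + b t * u' t + k t * u t = 0 :=
    fun t ht => by rw [max_eq_left ht]; ring
  refine ⟨u, u', _, fun t _ => (hu t).1, fun t _ => (hu t).2, heq, ?_, ?_,
    not_bounded_of_chetaev hα hk hkα hpos (fun t _ => (hu t).1) (fun t _ => (hu t).2) heq ?_ ?_⟩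
  · rw [hu₀, hu'₀]; nlinarith
  · rw [hu₀, hu'₀, zero_pow two_ne_zero, mul_zero]; positivity
  · rw [hu₀, hu'₀]; simpa using div_neg_of_pos_of_neg (by positivity) hkt₀
  · rw [hu'₀]; positivity

end Chetaev

theorem stmt_15_general (t₀ α : ℝ) (hα : 0 < α) (b k k' : ℝ → ℝ)
    (hb : ContinuousOn b (Ici t₀))
    (hk : ∀ t ≥ t₀, HasDerivAt k (k' t) t)
    (hkα : ∀ t ≥ t₀, α ≤ -k t)
    (hpos : ∀ t ≥ t₀, 0 ≤ k' t + 2 * b t * k t) :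
    (∀ δ > (0 : ℝ), ∃ u u' u'' : ℝ → ℝ,
      (∀ t ≥ t₀, HasDerivAt u (u' t) t)
      ∧ (∀ t ≥ t₀, HasDerivAt u' (u'' t) t)
      ∧ (∀ t ≥ t₀, u'' t + b t * u' t + k t * u t = 0)
      ∧ u t₀ ^ 2 + u' t₀ ^ 2 < δ ^ 2
      ∧ -k t₀ * u t₀ ^ 2 < u' t₀ ^ 2
      ∧ ¬ ∃ C : ℝ, ∀ t ≥ t₀, u t ^ 2 + u' t ^ 2 ≤ C)
    ∧ ¬ IsStableZero t₀ b k := by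
  have hunstable := fun δ (hδ : δ > 0) => exists_small_unbounded_solution hα hb hk hkα hpos hδ
  refine ⟨hunstable, fun hstab => ?_⟩
  obtain ⟨δ, hδ, hstable⟩ := hstab 1 one_pos
  obtain ⟨u, u', u'', hu, hu', heq, hsmall, -, hunbounded⟩ := hunstable δ hδ
  exact hunbounded ⟨1, fun t ht => by simpa using (hstable u u' u'' hu hu' heq hsmall t ht).le⟩

theorem stmt_15 (t₀ α : ℝ) (hα : 0 < α) (b k k' : ℝ → ℝ)
    (hb : ContinuousOn b (Ici t₀))
    (hk : ∀ t ≥ t₀, HasDerivAt k (k' t) t)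
    (hk'c : ContinuousOn k' (Ici t₀))
    (hkα : ∀ t ≥ t₀, α ≤ -k t)
    (hpos : ∀ t ≥ t₀, 0 ≤ k' t + 2 * b t * k t) :
    (∀ δ > (0 : ℝ), ∃ u u' u'' : ℝ → ℝ,
      (∀ t ≥ t₀, HasDerivAt u (u' t) t)
      ∧ (∀ t ≥ t₀, HasDerivAt u' (u'' t) t)
      ∧ (∀ t ≥ t₀, u'' t + b t * u' t + k t * u t = 0)
      ∧ u t₀ ^ 2 + u' t₀ ^ 2 < δ ^ 2
      ∧ -k t₀ * u t₀ ^ 2 < u' t₀ ^ 2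
      ∧ ¬ ∃ C : ℝ, ∀ t ≥ t₀, u t ^ 2 + u' t ^ 2 ≤ C)
    ∧ ¬ IsStableZero t₀ b k :=
  stmt_15_general t₀ α hα b k k' hb hk hkα hpos
end

section
/- If b, k are continuous, k nondecreasing and nonpositive on [t₀, ∞), b(t) > 0, 1/b(t) + k(t) ≥ M, and (d/dt)e^{1/b + k} ≤ -(e^{1/b+k} - k)²/(2b), then b'(t) ≥ b(t)/2 for all t ≥ t₀, and consequently b(t) ≥ b(t₀) e^{(t-t₀)/2}. -/
/-!
Differentiating `exp (1 / b + k)` turns the hypothesis into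
`exp (1 / b + k) * b' / b ^ 2 ≥ exp (1 / b + k) * k' + (exp (1 / b + k) - k) ^ 2 / (2 * b)`.
Here `k' ≥ 0` because `k` is nondecreasing, and `(exp (1 / b + k) - k) ^ 2 ≥ exp (1 / b + k)`
because `k ≤ 0` and `exp (1 / b + k) - k ≥ 1 + 1 / b > 1`; hence `b' ≥ b / 2`.
The exponential lower bound follows since `b t * exp (-(t - t₀) / 2)` is then nondecreasing.
-/

open Set Real

lemma HasDerivAt.nonneg_of_monotoneOn_Ici {g : ℝ → ℝ} {g' a x : ℝ} (hd : HasDerivAt g g' x)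
    (hg : MonotoneOn g (Ici a)) (hx : a ≤ x) : 0 ≤ g' :=
  hd.hasDerivWithinAt.nonneg_of_monotoneOn (uniqueDiffOn_Ici a x hx).accPt hg

lemma Real.exp_le_sq_exp_sub {x k : ℝ} (hk : k ≤ 0) (hkx : k ≤ x) : exp x ≤ (exp x - k) ^ 2 := by
  have hone : 1 ≤ exp x - k := by linarith [add_one_le_exp x]
  rcases le_total (exp x) 1 with h | h <;> nlinarith

lemma hasDerivAt_exp_inv_add {b k : ℝ → ℝ} {b' k' t : ℝ} (hb : HasDerivAt b b' t)
    (hk : HasDerivAt k k' t) (hbt : b t ≠ 0) :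
    HasDerivAt (fun s => exp (1 / b s + k s)) (exp (1 / b t + k t) * (-b' / b t ^ 2 + k')) t := by
  have hsum : HasDerivAt (fun s => (b s)⁻¹ + k s) (-b' / b t ^ 2 + k') t := (hb.inv hbt).add hk
  simpa only [one_div] using hsum.exp

lemma half_le_of_exp_inv_add_mul_le {β β' κ κ' : ℝ} (hβ : 0 < β) (hκ : κ ≤ 0) (hκ' : 0 ≤ κ')
    (h : exp (1 / β + κ) * (-β' / β ^ 2 + κ') ≤ -(exp (1 / β + κ) - κ) ^ 2 / (2 * β)) :
    β / 2 ≤ β' := by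
  set E := exp (1 / β + κ)
  have hE : 0 < E := exp_pos _
  have hsq : E ≤ (E - κ) ^ 2 := exp_le_sq_exp_sub hκ (by linarith [one_div_pos.2 hβ])
  have hcleared : (E - κ) ^ 2 * β + 2 * β ^ 2 * E * κ' ≤ 2 * E * β' := by
    have := mul_le_mul_of_nonneg_right h (by positivity : (0 : ℝ) ≤ 2 * β ^ 2)
    field_simp at this
    linarith
  nlinarith [mul_le_mul_of_nonneg_right hsq hβ.le, mul_nonneg (mul_nonneg (sq_nonneg β) hE.le) hκ']

lemma mul_exp_le_of_mul_le_deriv {f f' : ℝ → ℝ} {a c : ℝ} (hf : ∀ t ≥ a, HasDerivAt f (f' t) t)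
    (hc : ∀ t ≥ a, c * f t ≤ f' t) {t : ℝ} (ht : a ≤ t) : f a * exp (c * (t - a)) ≤ f t := by
  set g : ℝ → ℝ := fun s => f s * exp (-(c * (s - a)))
  have hg : ∀ s ≥ a, HasDerivAt g ((f' s - c * f s) * exp (-(c * (s - a)))) s := by
    intro s hs
    have he : HasDerivAt (fun s => exp (-(c * (s - a)))) (exp (-(c * (s - a))) * -(c * 1)) s :=
      (((hasDerivAt_id s).sub_const a).const_mul c).neg.exp
    exact ((hf s hs).mul he).congr_deriv (by ring)
  have hmono : MonotoneOn g (Ici a) :=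
    monotoneOn_of_hasDerivWithinAt_nonneg (convex_Ici a)
      (fun s hs => (hg s hs).continuousAt.continuousWithinAt)
      (fun s hs => (hg s (interior_subset hs)).hasDerivWithinAt)
      (fun s hs => mul_nonneg (sub_nonneg.2 (hc s (interior_subset hs))) (exp_pos _).le)
  have hgt : f a ≤ g t := by simpa [g] using hmono self_mem_Ici ht ht
  calc f a * exp (c * (t - a)) ≤ g t * exp (c * (t - a)) :=
        mul_le_mul_of_nonneg_right hgt (exp_pos _).le
    _ = f t := by simp only [g, mul_assoc, ← exp_add, neg_add_cancel, exp_zero, mul_one]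

theorem stmt_19_general (t₀ : ℝ) (b b' k k' E' : ℝ → ℝ)
    (hbd : ∀ t ≥ t₀, HasDerivAt b (b' t) t)
    (hkd : ∀ t ≥ t₀, HasDerivAt k (k' t) t)
    (hkmono : MonotoneOn k (Ici t₀))
    (hkneg : ∀ t ≥ t₀, k t ≤ 0)
    (hbpos : ∀ t ≥ t₀, 0 < b t)
    (hE : ∀ t ≥ t₀, HasDerivAt (fun s => Real.exp (1 / b s + k s)) (E' t) t)
    (hE' : ∀ t ≥ t₀, E' t ≤ -(Real.exp (1 / b t + k t) - k t) ^ 2 / (2 * b t)) :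
    (∀ t ≥ t₀, b t / 2 ≤ b' t)
    ∧ ∀ t ≥ t₀, b t₀ * Real.exp ((t - t₀) / 2) ≤ b t := by
  have hhalf : ∀ t ≥ t₀, b t / 2 ≤ b' t := by
    intro t ht
    have hE'eq := (hE t ht).unique
      (hasDerivAt_exp_inv_add (hbd t ht) (hkd t ht) (hbpos t ht).ne')
    refine half_le_of_exp_inv_add_mul_le (hbpos t ht) (hkneg t ht)
      ((hkd t ht).nonneg_of_monotoneOn_Ici hkmono ht) ?_
    exact hE'eq ▸ hE' t ht
  refine ⟨hhalf, fun t ht => ?_⟩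
  simpa only [div_eq_inv_mul] using
    mul_exp_le_of_mul_le_deriv hbd (fun s hs => by simpa only [div_eq_inv_mul] using hhalf s hs) ht

theorem stmt_19 (t₀ M : ℝ) (b b' k k' E' : ℝ → ℝ)
    (hbd : ∀ t ≥ t₀, HasDerivAt b (b' t) t)
    (hb'c : ContinuousOn b' (Ici t₀))
    (hkd : ∀ t ≥ t₀, HasDerivAt k (k' t) t)
    (hk'c : ContinuousOn k' (Ici t₀))
    (hkmono : MonotoneOn k (Ici t₀))
    (hkneg : ∀ t ≥ t₀, k t ≤ 0)
    (hbpos : ∀ t ≥ t₀, 0 < b t)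
    (hM : ∀ t ≥ t₀, M ≤ 1 / b t + k t)
    (hE : ∀ t ≥ t₀, HasDerivAt (fun s => Real.exp (1 / b s + k s)) (E' t) t)
    (hE' : ∀ t ≥ t₀, E' t ≤ -(Real.exp (1 / b t + k t) - k t) ^ 2 / (2 * b t)) :
    (∀ t ≥ t₀, b t / 2 ≤ b' t)
    ∧ ∀ t ≥ t₀, b t₀ * Real.exp ((t - t₀) / 2) ≤ b t :=
  stmt_19_general t₀ b b' k k' E' hbd hkd hkmono hkneg hbpos hE hE'
end
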